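/- Length bound for RAL# resource-extended computations: Let M be an RB-CGS#, A a coalition of proponents, B a set of resource-bounded opponents with A ∪ B nonempty, F_A a strategy for A, η an endowment, and s a state. Then every (η, F_A, B)-computation from s has length at most (min_{a ∈ A∪B} η_a(res₁)) + 1, where η_a(res₁) is agent a's endowment of the first (diminishing) resource. -/

import Mathlib

/-- A resource-bounded concurrent game structure with a diminishing resource (RB-CGS#). -/
structure RBCGS (Agt S Act Res : Type) where
  /-- available actions for each agent in each state -/
  d : S → Agt → Set Act
  d_ne : ∀ s a, (d s a).Nonempty
  /-- cost function (negative = consumption, positive = production) -/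
  cost : S → Act → Res → ℤ
  /-- the distinguished diminishing resource (the "first" resource) -/
  res1 : Res
  /-- every available action consumes at least one unit of the diminishing resource -/
  cost_first : ∀ s (a : Agt) (α : Act), α ∈ d s a → cost s α res1 ≤ -1
  /-- partial transition function on joint actions -/
  tr : S → (Agt → Act) → Option S

namespace RBCGS

variable {Agt S Act Res : Type}

/-- consumption of resource ρ by action α at state s : `|min(0, c(s,α))|`. -/
def consR (M : RBCGS Agt S Act Res) (s : S) (α : Act) (ρ : Res) : ℕ :=
  (min 0 (M.cost s α ρ)).natAbs

/-- production of resource ρ by action α at state s : `max(0, c(s,α))`. -/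
def prodR (M : RBCGS Agt S Act Res) (s : S) (α : Act) (ρ : Res) : ℕ :=
  (max 0 (M.cost s α ρ)).toNat

/-- σ is a (projection of a) joint action for coalition A at state s. -/
def JointAt (M : RBCGS Agt S Act Res) (A : Set Agt) (s : S) (σ : Agt → Act) : Prop :=
  ∀ a ∈ A, σ a ∈ M.d s a

/-- outcomes of a joint action of coalition A at state s. -/
def outA (M : RBCGS Agt S Act Res) (A : Set Agt) (s : S) (σA : Agt → Act) : Set S :=
  { s' | ∃ σ : Agt → Act, (∀ a, σ a ∈ M.d s a) ∧ (∀ a ∈ A, σ a = σA a) ∧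
    M.tr s σ = some s' }

variable [Inhabited S]

/-- F is a strategy for coalition A : on every nonempty history it prescribes a joint
action available to A at the last state of the history. -/
def Strategy (M : RBCGS Agt S Act Res) (A : Set Agt) (F : List S → Agt → Act) : Prop :=
  ∀ l : List S, l ≠ [] → M.JointAt A (l.getD (l.length - 1) default) (F l)

/-- l is a (finite, nonempty) computation starting at s consistent with strategy F
(the computation `λ[1..k]` is represented 0-based as `l[0..k-1]`). -/
def ConsistentFrom (M : RBCGS Agt S Act Res) (A : Set Agt) (F : List S → Agt → Act)
    (s : S) (l : List S) : Prop :=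
  l ≠ [] ∧ l.getD 0 default = s ∧
    ∀ i, i + 1 < l.length →
      l.getD (i + 1) default ∈ M.outA A (l.getD i default) (F (l.take (i + 1)))

/-- `eAvail M F b l i a ρ` is the amount `e_a(λ[i+1])` of resource ρ available to a
after i steps of l under strategy F with initial bound b. -/
def eAvail (M : RBCGS Agt S Act Res) (F : List S → Agt → Act)
    (b : Agt → Res → ℕ) (l : List S) : ℕ → Agt → Res → ℤ
  | 0 => fun a ρ => (b a ρ : ℤ)
  | i + 1 => fun a ρ =>
      eAvail M F b l i a ρ
        - (M.consR (l.getD i default) (F (l.take (i + 1)) a) ρ : ℤ)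
        + (M.prodR (l.getD i default) (F (l.take (i + 1)) a) ρ : ℤ)

/-- l is b-consistent with strategy F for coalition A. -/
def BConsistent (M : RBCGS Agt S Act Res) (A : Set Agt) (F : List S → Agt → Act)
    (b : Agt → Res → ℕ) (l : List S) : Prop :=
  ∀ a ∈ A, ∀ i, i + 1 < l.length → ∀ ρ,
    (M.consR (l.getD i default) (F (l.take (i + 1)) a) ρ : ℤ) ≤ M.eAvail F b l i a ρ

/-- l is a b-maximal computation from s consistent with F. -/
def BMaximal (M : RBCGS Agt S Act Res) (A : Set Agt) (F : List S → Agt → Act)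
    (b : Agt → Res → ℕ) (s : S) (l : List S) : Prop :=
  M.ConsistentFrom A F s l ∧ M.BConsistent A F b l ∧
    ¬ ∃ l' : List S, l <+: l' ∧ l.length < l'.length ∧
        M.ConsistentFrom A F s l' ∧ M.BConsistent A F b l'

/-- `out(s, F_A, b)` : the set of b-maximal computations from s consistent with F. -/
def outSet (M : RBCGS Agt S Act Res) (A : Set Agt) (F : List S → Agt → Act)
    (b : Agt → Res → ℕ) (s : S) : Set (List S) :=
  { l | M.BMaximal A F b s l }

end RBCGS

namespace RBCGS

variable {Agt S Act Res : Type} [Inhabited S]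

/-- An endowment assigns to each agent a vector of natural-number resource amounts. -/
abbrev Endow (Agt Res : Type) : Type := Agt → Res → ℕ

/-- `RalComp M A B F s η l` : l is an (η, F_A, B)-computation from s, i.e. a
resource-extended computation (a nonempty finite sequence of state–endowment pairs,
0-based) where A are the proponents following strategy F and B the resource-bounded
opponents. -/
def RalComp (M : RBCGS Agt S Act Res) (A B : Set Agt) (F : List S → Agt → Act)
    (s : S) (η : Endow Agt Res) (l : List (S × Endow Agt Res)) : Prop :=
  l ≠ [] ∧ l.getD 0 default = (s, η) ∧
    ∀ i, i + 1 < l.length → ∃ σ : Agt → Act,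
      (∀ a, σ a ∈ M.d (l.getD i default).1 a) ∧
      (∀ a ∈ A, σ a = F ((l.map Prod.fst).take (i + 1)) a) ∧
      M.tr (l.getD i default).1 σ = some (l.getD (i + 1) default).1 ∧
      (∀ a ∈ A ∪ B, ∀ ρ : Res,
        M.consR (l.getD i default).1 (σ a) ρ ≤ (l.getD i default).2 a ρ) ∧
      (∀ a ∈ A ∪ B, ∀ ρ : Res,
        ((l.getD (i + 1) default).2 a ρ : ℤ) =
          ((l.getD i default).2 a ρ : ℤ)
            + (M.prodR (l.getD i default).1 (σ a) ρ : ℤ)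
            - (M.consR (l.getD i default).1 (σ a) ρ : ℤ)) ∧
      (∀ a, a ∉ A ∪ B → ∀ ρ : Res,
        (l.getD (i + 1) default).2 a ρ = (l.getD i default).2 a ρ)

/-- `out(s, η, F_A, B)` : the set of maximal (η, F_A, B)-computations from s. -/
def ralOut (M : RBCGS Agt S Act Res) (A B : Set Agt) (F : List S → Agt → Act)
    (s : S) (η : Endow Agt Res) : Set (List (S × Endow Agt Res)) :=
  { l | M.RalComp A B F s η l ∧
      ¬ ∃ l', l <+: l' ∧ l.length < l'.length ∧ M.RalComp A B F s η l' }

end RBCGS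

/-- Formulas of RAL#: each modality carries proponents A and resource-bounded opponents
B, and is either of the down-arrow (current endowment) kind or carries a fresh
endowment ζ. -/
inductive RALForm (Agt Res P : Type) : Type 1 where
  | prop : P → RALForm Agt Res P
  | neg : RALForm Agt Res P → RALForm Agt Res P
  | and : RALForm Agt Res P → RALForm Agt Res P → RALForm Agt Res P
  | nxtD : Set Agt → Set Agt → RALForm Agt Res P → RALForm Agt Res P
  | nxtE : Set Agt → Set Agt → (Agt → Res → ℕ) → RALForm Agt Res P → RALForm Agt Res P
  | untlD : Set Agt → Set Agt → RALForm Agt Res P → RALForm Agt Res P → RALForm Agt Res P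
  | untlE : Set Agt → Set Agt → (Agt → Res → ℕ) → RALForm Agt Res P → RALForm Agt Res P →
      RALForm Agt Res P
  | rlsD : Set Agt → Set Agt → RALForm Agt Res P → RALForm Agt Res P → RALForm Agt Res P
  | rlsE : Set Agt → Set Agt → (Agt → Res → ℕ) → RALForm Agt Res P → RALForm Agt Res P →
      RALForm Agt Res P

namespace RBCGS

variable {Agt S Act Res P : Type} [Inhabited S]

/-- Truth of a RAL# formula at a state and an endowment (`M, s, η ⊨ φ`). -/
def SatR (M : RBCGS Agt S Act Res) (V : P → S → Prop) :
    RALForm Agt Res P → S → Endow Agt Res → Prop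
  | .prop p, s, _ => V p s
  | .neg φ, s, η => ¬ SatR M V φ s η
  | .and φ ψ, s, η => SatR M V φ s η ∧ SatR M V ψ s η
  | .nxtD A B φ, s, η => ∃ F, M.Strategy A F ∧
      ∀ l ∈ M.ralOut A B F s η, 2 ≤ l.length ∧
        SatR M V φ (l.getD 1 default).1 (l.getD 1 default).2
  | .nxtE A B ζ φ, s, _ => ∃ F, M.Strategy A F ∧
      ∀ l ∈ M.ralOut A B F s ζ, 2 ≤ l.length ∧
        SatR M V φ (l.getD 1 default).1 (l.getD 1 default).2
  | .untlD A B φ ψ, s, η => ∃ F, M.Strategy A F ∧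
      ∀ l ∈ M.ralOut A B F s η, ∃ i < l.length,
        SatR M V ψ (l.getD i default).1 (l.getD i default).2 ∧
          ∀ j < i, SatR M V φ (l.getD j default).1 (l.getD j default).2
  | .untlE A B ζ φ ψ, s, _ => ∃ F, M.Strategy A F ∧
      ∀ l ∈ M.ralOut A B F s ζ, ∃ i < l.length,
        SatR M V ψ (l.getD i default).1 (l.getD i default).2 ∧
          ∀ j < i, SatR M V φ (l.getD j default).1 (l.getD j default).2
  | .rlsD A B φ ψ, s, η => ∃ F, M.Strategy A F ∧
      ∀ l ∈ M.ralOut A B F s η,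
        (∃ i < l.length,
          SatR M V φ (l.getD i default).1 (l.getD i default).2 ∧
          SatR M V ψ (l.getD i default).1 (l.getD i default).2 ∧
          ∀ j ≤ i, SatR M V ψ (l.getD j default).1 (l.getD j default).2) ∨
        (∀ j < l.length, SatR M V ψ (l.getD j default).1 (l.getD j default).2)
  | .rlsE A B ζ φ ψ, s, _ => ∃ F, M.Strategy A F ∧
      ∀ l ∈ M.ralOut A B F s ζ,
        (∃ i < l.length,
          SatR M V φ (l.getD i default).1 (l.getD i default).2 ∧
          SatR M V ψ (l.getD i default).1 (l.getD i default).2 ∧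
          ∀ j ≤ i, SatR M V ψ (l.getD j default).1 (l.getD j default).2) ∨
        (∀ j < l.length, SatR M V ψ (l.getD j default).1 (l.getD j default).2)

end RBCGS

/-- All proponent coalitions occurring in a RAL# formula are nonempty. -/
def RALForm.goodCoal {Agt Res P : Type} : RALForm Agt Res P → Prop
  | .prop _ => True
  | .neg φ => φ.goodCoal
  | .and φ ψ => φ.goodCoal ∧ ψ.goodCoal
  | .nxtD A _ φ => A.Nonempty ∧ φ.goodCoal
  | .nxtE A _ _ φ => A.Nonempty ∧ φ.goodCoal
  | .untlD A _ φ ψ => A.Nonempty ∧ φ.goodCoal ∧ ψ.goodCoal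
  | .untlE A _ _ φ ψ => A.Nonempty ∧ φ.goodCoal ∧ ψ.goodCoal
  | .rlsD A _ φ ψ => A.Nonempty ∧ φ.goodCoal ∧ ψ.goodCoal
  | .rlsE A _ _ φ ψ => A.Nonempty ∧ φ.goodCoal ∧ ψ.goodCoal

/-! Every available action consumes at least one unit of the diminishing resource and produces
none of it, so along a computation the diminishing-resource endowment of each resource-bounded
agent drops by at least one per step. Being a natural number, it allows at most `η_a(res₁)`
steps, i.e. at most `η_a(res₁) + 1` states, for every `a ∈ A ∪ B`; take `a` attaining the
minimum. -/

namespace RBCGS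

variable {Agt S Act Res : Type} (M : RBCGS Agt S Act Res)

theorem one_le_consR_res1 {s : S} {a : Agt} {α : Act} (hα : α ∈ M.d s a) :
    1 ≤ M.consR s α M.res1 := by
  have := M.cost_first s a α hα
  unfold consR
  omega

theorem prodR_res1_eq_zero {s : S} {a : Agt} {α : Act} (hα : α ∈ M.d s a) :
    M.prodR s α M.res1 = 0 := by
  have := M.cost_first s a α hα
  unfold prodR
  omega

variable [Inhabited S] {M} {A B : Set Agt} {F : List S → Agt → Act} {s : S}
  {η : Endow Agt Res} {l : List (S × Endow Agt Res)}

theorem RalComp.endow_res1_succ_lt (hl : M.RalComp A B F s η l) {a : Agt} (ha : a ∈ A ∪ B)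
    {i : ℕ} (hi : i + 1 < l.length) :
    (l.getD (i + 1) default).2 a M.res1 < (l.getD i default).2 a M.res1 := by
  obtain ⟨σ, hσ, -, -, -, hupdate, -⟩ := hl.2.2 i hi
  have hcons := M.one_le_consR_res1 (hσ a)
  have hprod := M.prodR_res1_eq_zero (hσ a)
  have := hupdate a ha M.res1
  omega

theorem RalComp.endow_res1_add_le (hl : M.RalComp A B F s η l) {a : Agt} (ha : a ∈ A ∪ B) :
    ∀ i < l.length, (l.getD i default).2 a M.res1 + i ≤ η a M.res1
  | 0, _ => by rw [hl.2.1]; exact le_rfl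
  | i + 1, hi => by
    have := hl.endow_res1_succ_lt ha hi
    have := hl.endow_res1_add_le ha i (by omega)
    omega

theorem RalComp.length_le_endow_res1_add_one (hl : M.RalComp A B F s η l) {a : Agt}
    (ha : a ∈ A ∪ B) : l.length ≤ η a M.res1 + 1 := by
  have hpos : 0 < l.length := List.length_pos_iff.mpr hl.1
  have := hl.endow_res1_add_le ha (l.length - 1) (by omega)
  omega

end RBCGS

theorem ral_length_bound_general {Agt S Act Res : Type} [Inhabited S]
    (M : RBCGS Agt S Act Res) (A B : Set Agt) (hAB : (A ∪ B).Nonempty)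
    (F : List S → Agt → Act)
    (η : RBCGS.Endow Agt Res) (s : S)
    (l : List (S × RBCGS.Endow Agt Res)) (hl : M.RalComp A B F s η l) :
    l.length ≤ sInf ((fun a => η a M.res1) '' (A ∪ B)) + 1 := by
  obtain ⟨a, ha, hmin⟩ := Nat.sInf_mem (hAB.image fun a => η a M.res1)
  exact hmin ▸ hl.length_le_endow_res1_add_one ha

/-- Length bound for RAL# resource-extended computations: every
(η, F_A, B)-computation from s has length at most `min_{a ∈ A∪B} η_a(res₁) + 1`. -/
theorem ral_length_bound {Agt S Act Res : Type} [Inhabited S]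
    (M : RBCGS Agt S Act Res) (A B : Set Agt) (hAB : (A ∪ B).Nonempty)
    (F : List S → Agt → Act) (hF : M.Strategy A F)
    (η : RBCGS.Endow Agt Res) (s : S)
    (l : List (S × RBCGS.Endow Agt Res)) (hl : M.RalComp A B F s η l) :
    l.length ≤ sInf ((fun a => η a M.res1) '' (A ∪ B)) + 1 :=
  ral_length_bound_general M A B hAB F η s l hl
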